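/- Let a, b ∈ ℝ with a < b, α ≥ 1, m = α(b−a)/4, g(x) = (4/(b−a)²)·(x − (a+b)/2)², and for k ≥ 1 let x_k* = (a+b)/2 − α^{−1/(2k−1)}·(b−a)/2 be the unique minimizer of J_k(x) = x + (m/k)·g(x)^k. Then for every δ with 0 < δ < (b−a)/2, if the integer k satisfies k ≥ 1/2 − ln(α)/(2·ln(1 − 2δ/(b−a))), then 0 ≤ x_k* − a ≤ δ. -/
import Mathlib


/-- The one-dimensional constraint function `g(x) = (4/(b−a)²)(x − (a+b)/2)²`. -/
noncomputable def gOne (a b : ℝ) (x : ℝ) : ℝ := 4 / (b - a) ^ 2 * (x - (a + b) / 2) ^ 2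

/-- The one-dimensional auxiliary cost `J_k(x) = x + (m/k)·g(x)^k` with `m = α(b−a)/4`. -/
noncomputable def JOne (a b α : ℝ) (k : ℕ) (x : ℝ) : ℝ :=
  x + (α * (b - a) / 4 / (k : ℝ)) * (gOne a b x) ^ k

/-- The explicit minimizer `x_k* = (a+b)/2 − α^{−1/(2k−1)}·(b−a)/2` of `J_k`. -/
noncomputable def xkStar (a b α : ℝ) (k : ℕ) : ℝ :=
  (a + b) / 2 - α ^ (-(1 / (2 * (k : ℝ) - 1))) * ((b - a) / 2)
/-- For `a < b`, `α ≥ 1`, `m = α(b−a)/4`, and precision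
`0 < δ < (b−a)/2`, if the integer `k` satisfies
`k ≥ 1/2 − ln(α)/(2·ln(1 − 2δ/(b−a)))`, then the minimizer
`x_k* = (a+b)/2 − α^{−1/(2k−1)}·(b−a)/2` of `J_k` satisfies `0 ≤ x_k* − a ≤ δ`. -/
theorem minAB_iterations_for_precision (a b α δ : ℝ) (hab : a < b) (hα : 1 ≤ α)
    (hδ0 : 0 < δ) (hδ : δ < (b - a) / 2) (k : ℕ)
    (hk : (1 : ℝ) / 2 - Real.log α / (2 * Real.log (1 - 2 * δ / (b - a))) ≤ (k : ℝ)) :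
    0 ≤ xkStar a b α k - a ∧ xkStar a b α k - a ≤ δ := by
  have hba : 0 < b - a := sub_pos.mpr hab
  have hα0 : 0 < α := lt_of_lt_of_le one_pos hα
  set c : ℝ := 1 - 2 * δ / (b - a) with hc
  have hc0 : 0 < c := by
    have h : 2 * δ / (b - a) < 1 := by rw [div_lt_one hba]; linarith
    simp only [hc]; linarith
  have hc1 : c < 1 := by
    have h : 0 < 2 * δ / (b - a) := by positivity
    simp only [hc]; linarith
  have hlogc : Real.log c < 0 := Real.log_neg hc0 hc1
  have hlogα : 0 ≤ Real.log α := Real.log_nonneg hα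
  have hknn : (1 : ℝ) / 2 ≤ (k : ℝ) := by
    have h1 : 0 ≤ -(Real.log α / (2 * Real.log c)) := by
      apply neg_nonneg.mpr
      apply div_nonpos_of_nonneg_of_nonpos hlogα
      linarith
    linarith
  have hk1 : (1 : ℝ) ≤ (k : ℝ) := by
    rcases Nat.eq_zero_or_pos k with h | h
    · simp [h] at hknn; norm_num at hknn
    · exact_mod_cast h
  have hq : 0 < 2 * (k : ℝ) - 1 := by linarith
  have hkey : Real.log α ≤ (2 * (k : ℝ) - 1) * (-Real.log c) := by
    have h2 : -(Real.log α / (2 * Real.log c)) ≤ (k : ℝ) - 1 / 2 := by linarith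
    have h3 : -(Real.log α / (2 * Real.log c)) * (2 * Real.log c)
        ≥ ((k : ℝ) - 1 / 2) * (2 * Real.log c) := by
      apply mul_le_mul_of_nonpos_right h2 (by linarith)
    have hne : 2 * Real.log c ≠ 0 := ne_of_lt (by linarith)
    have h4 : -(Real.log α / (2 * Real.log c)) * (2 * Real.log c) = -Real.log α := by
      rw [neg_mul, div_mul_cancel₀ _ hne]
    nlinarith [h3, h4]
  set r : ℝ := α ^ (-(1 / (2 * (k : ℝ) - 1))) with hr
  have hr1 : r ≤ 1 := by
    apply Real.rpow_le_one_of_one_le_of_nonpos hα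
    have : 0 ≤ 1 / (2 * (k : ℝ) - 1) := by positivity
    linarith
  have hrc : c ≤ r := by
    rw [hr, Real.rpow_def_of_pos hα0]
    rw [← Real.exp_log hc0]
    apply Real.exp_le_exp.mpr
    have h5 : Real.log α * (-(1 / (2 * (k : ℝ) - 1))) = -(Real.log α / (2 * (k : ℝ) - 1)) := by
      field_simp
    rw [h5, le_neg, div_le_iff₀ hq]
    nlinarith [hkey]
  have hx : xkStar a b α k - a = (b - a) / 2 * (1 - r) := by
    simp only [xkStar, hr]; ring
  constructor
  · rw [hx]; nlinarith [hr1, hba]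
  · rw [hx]
    have h6 : 1 - r ≤ 1 - c := by linarith
    have h7 : (b - a) / 2 * (1 - c) = δ := by
      simp only [hc]; field_simp; ring
    have h8 := mul_le_mul_of_nonneg_left h6 (by positivity : (0:ℝ) ≤ (b - a) / 2)
    linarith
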